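/- arXiv:2212.01620 — 6 statements merged into one kernel-verified Lean document; each statement's English description precedes it below -/
import Mathlib

section
/- Let D be a finite set of weighted axis-parallel rectangles, let S be an optimum solution of cardinality at most k with maximum-weight element R_max, and let D' be obtained from D by removing every rectangle of weight greater than ω(R_max) and every rectangle of weight at most ε·ω(R_max)/k. Then opt_k(D') ≥ (1−ε)·opt_k(D). -/
/-! The rectangles of `S` heavier than `t = ε·ω(Rmax)/k` all lie in `D'` and still form a
solution there. The discarded ones are at most `k` rectangles of weight at most `t`, so they
weigh at most `ε·ω(Rmax) ≤ ε·opt_k(D)`. -/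

open Finset

def IsRect (R : Set (ℝ × ℝ)) : Prop :=
  ∃ x1 x2 y1 y2 : ℝ, R = Set.Icc x1 x2 ×ˢ Set.Icc y1 y2

def IsSeg (R : Set (ℝ × ℝ)) : Prop :=
  ∃ x1 x2 y1 y2 : ℝ, (x1 = x2 ∨ y1 = y2) ∧ R = Set.Icc x1 x2 ×ˢ Set.Icc y1 y2

/-- A solution: a subset of `D` of cardinality at most `k` consisting of pairwise disjoint
objects. -/
def IsSolution (D : Finset (Set (ℝ × ℝ))) (k : ℕ) (S : Finset (Set (ℝ × ℝ))) : Prop :=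
  S ⊆ D ∧ S.card ≤ k ∧ (↑S : Set (Set (ℝ × ℝ))).Pairwise Disjoint

/-- `optk D ω k` : the maximum total `ω`-weight of a set of at most `k` pairwise disjoint
members of `D`. -/
noncomputable def optk (D : Finset (Set (ℝ × ℝ))) (ω : Set (ℝ × ℝ) → ℝ) (k : ℕ) : ℝ :=
  sSup {w : ℝ | ∃ S : Finset (Set (ℝ × ℝ)), IsSolution D k S ∧ w = ∑ R ∈ S, ω R}

theorem Finset.sum_le_sum_filter_lt_add_card_nsmul {ι M : Type*} [AddCommMonoid M]
    [LinearOrder M] [IsOrderedAddMonoid M] (s : Finset ι) (f : ι → M) {t : M} (ht : 0 ≤ t) :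
    ∑ i ∈ s, f i ≤ ∑ i ∈ s with t < f i, f i + #s • t := by
  rw [← sum_filter_add_sum_filter_not s (fun i => t < f i)]
  gcongr
  calc ∑ i ∈ s with ¬t < f i, f i
      ≤ #(s.filter fun i => ¬t < f i) • t :=
        sum_le_card_nsmul _ _ _ fun i hi => not_lt.1 (mem_filter.1 hi).2
    _ ≤ #s • t := nsmul_le_nsmul_left ht (card_filter_le _ _)

theorem IsSolution.of_subset {D D' S T : Finset (Set (ℝ × ℝ))} {k : ℕ} (hS : IsSolution D k S)
    (hTS : T ⊆ S) (hTD' : T ⊆ D') : IsSolution D' k T :=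
  ⟨hTD', (card_le_card hTS).trans hS.2.1, hS.2.2.mono (coe_subset.2 hTS)⟩

theorem bddAbove_solution_weights (D : Finset (Set (ℝ × ℝ))) (ω : Set (ℝ × ℝ) → ℝ) (k : ℕ) :
    BddAbove {w : ℝ | ∃ S : Finset (Set (ℝ × ℝ)), IsSolution D k S ∧ w = ∑ R ∈ S, ω R} := by
  refine ((D.powerset.image fun S => ∑ R ∈ S, ω R).finite_toSet.subset ?_).bddAbove
  rintro w ⟨S, hS, rfl⟩
  exact mem_coe.2 (mem_image_of_mem _ (mem_powerset.2 hS.1))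

theorem IsSolution.sum_le_optk {D S : Finset (Set (ℝ × ℝ))} {k : ℕ} (hS : IsSolution D k S)
    (ω : Set (ℝ × ℝ) → ℝ) : ∑ R ∈ S, ω R ≤ optk D ω k :=
  le_csSup (bddAbove_solution_weights D ω k) ⟨S, hS, rfl⟩

theorem stmt1_general (D : Finset (Set (ℝ × ℝ))) (ω : Set (ℝ × ℝ) → ℝ) (k : ℕ) (hk : 0 < k)
    (ε : ℝ) (hε : 0 < ε)
    (hpos : ∀ R ∈ D, 0 < ω R)
    (S : Finset (Set (ℝ × ℝ))) (hS : IsSolution D k S)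
    (hopt : ∑ R ∈ S, ω R = optk D ω k)
    (Rmax : Set (ℝ × ℝ)) (hmem : Rmax ∈ S) (hmax : ∀ R ∈ S, ω R ≤ ω Rmax)
    (D' : Finset (Set (ℝ × ℝ)))
    (hD' : ∀ R, R ∈ D' ↔ R ∈ D ∧ ω R ≤ ω Rmax ∧ ε * ω Rmax / k < ω R) :
    (1 - ε) * optk D ω k ≤ optk D' ω k := by
  set t := ε * ω Rmax / k
  have ht : 0 ≤ t := by have := hpos Rmax (hS.1 hmem); positivity
  have hRmax_le_opt : ω Rmax ≤ optk D ω k :=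
    hopt ▸ single_le_sum (fun R hR => (hpos R (hS.1 hR)).le) hmem
  have hkt : k * t = ε * ω Rmax := mul_div_cancel₀ _ (Nat.cast_ne_zero.2 hk.ne')
  have hheavy : IsSolution D' k (S.filter fun R => t < ω R) :=
    hS.of_subset (filter_subset _ _) fun R hR =>
      have ⟨hRS, htR⟩ := mem_filter.1 hR
      (hD' R).2 ⟨hS.1 hRS, hmax R hRS, htR⟩
  have hsplit := S.sum_le_sum_filter_lt_add_card_nsmul ω ht
  have hcard : (#S : ℝ) * t ≤ k * t :=
    mul_le_mul_of_nonneg_right (by exact_mod_cast hS.2.1) ht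
  rw [nsmul_eq_mul] at hsplit
  calc (1 - ε) * optk D ω k
      ≤ optk D ω k - ε * ω Rmax := by linarith [mul_le_mul_of_nonneg_left hRmax_le_opt hε.le]
    _ = ∑ R ∈ S, ω R - k * t := by rw [hopt, hkt]
    _ ≤ ∑ R ∈ S with t < ω R, ω R := by linarith
    _ ≤ optk D' ω k := hheavy.sum_le_optk ω

/-- removing rectangles heavier than `ω Rmax` or of weight at most
`ε·ω Rmax / k` decreases the optimum by at most a factor `(1-ε)`. -/
theorem stmt1 (D : Finset (Set (ℝ × ℝ))) (ω : Set (ℝ × ℝ) → ℝ) (k : ℕ) (hk : 0 < k)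
    (ε : ℝ) (hε : 0 < ε)
    (hrect : ∀ R ∈ D, IsRect R) (hpos : ∀ R ∈ D, 0 < ω R)
    (S : Finset (Set (ℝ × ℝ))) (hS : IsSolution D k S)
    (hopt : ∑ R ∈ S, ω R = optk D ω k)
    (Rmax : Set (ℝ × ℝ)) (hmem : Rmax ∈ S) (hmax : ∀ R ∈ S, ω R ≤ ω Rmax)
    (D' : Finset (Set (ℝ × ℝ)))
    (hD' : ∀ R, R ∈ D' ↔ R ∈ D ∧ ω R ≤ ω Rmax ∧ ε * ω Rmax / k < ω R) :
    (1 - ε) * optk D ω k ≤ optk D' ω k :=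
  stmt1_general D ω k hk ε hε hpos S hS hopt Rmax hmem hmax D' hD'
end

section
/- Let G be a grid, and let R_A and R_B be axis-parallel rectangles each containing at least one grid point of G. If R_A and R_B intersect, then there exist grid points p ∈ R_A ∩ points(G) and q ∈ R_B ∩ points(G) that are adjacent, where two grid points are adjacent if they lie on the same or consecutive horizontal lines of G and on the same or consecutive vertical lines of G. -/
open Finset

/-- The grid points of the grid with vertical lines at `x`-coordinates `V` and horizontal
lines at `y`-coordinates `Hl`. -/
def gridPoints (V Hl : Finset ℝ) : Set (ℝ × ℝ) := {p : ℝ × ℝ | p.1 ∈ V ∧ p.2 ∈ Hl}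

/-- `a` and `b` are consecutive elements of `V` (with `a < b`). -/
def Consec (V : Finset ℝ) (a b : ℝ) : Prop :=
  a ∈ V ∧ b ∈ V ∧ a < b ∧ ∀ c ∈ V, ¬ (a < c ∧ c < b)

def SameOrConsec (V : Finset ℝ) (a b : ℝ) : Prop :=
  (a = b ∧ a ∈ V) ∨ Consec V a b ∨ Consec V b a

/-- Two grid points are adjacent: they lie on the same or consecutive vertical lines,
and on the same or consecutive horizontal lines. -/
def AdjPts (V Hl : Finset ℝ) (p q : ℝ × ℝ) : Prop :=
  SameOrConsec V p.1 q.1 ∧ SameOrConsec Hl p.2 q.2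

lemma key1 (V : Finset ℝ) (a1 a2 b1 b2 : ℝ)
    (ha : ∃ x, x ∈ Set.Icc a1 a2 ∧ x ∈ V)
    (hb : ∃ y, y ∈ Set.Icc b1 b2 ∧ y ∈ V)
    (hz : ∃ z, z ∈ Set.Icc a1 a2 ∧ z ∈ Set.Icc b1 b2) :
    ∃ u v, u ∈ Set.Icc a1 a2 ∧ u ∈ V ∧ v ∈ Set.Icc b1 b2 ∧ v ∈ V ∧ SameOrConsec V u v := by
  classical
  obtain ⟨z, hza, hzb⟩ := hz
  set A := V.filter (fun x => x ∈ Set.Icc a1 a2) with hAdef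
  set B := V.filter (fun x => x ∈ Set.Icc b1 b2) with hBdef
  obtain ⟨x, hx1, hx2⟩ := ha
  obtain ⟨y, hy1, hy2⟩ := hb
  have hne : (A ×ˢ B).Nonempty :=
    ⟨(x, y), Finset.mem_product.mpr
      ⟨Finset.mem_filter.mpr ⟨hx2, hx1⟩, Finset.mem_filter.mpr ⟨hy2, hy1⟩⟩⟩
  obtain ⟨⟨u, v⟩, hmem, hmin⟩ := Finset.exists_min_image (A ×ˢ B) (fun p => |p.1 - p.2|) hne
  rw [Finset.mem_product] at hmem
  have hu : u ∈ V ∧ u ∈ Set.Icc a1 a2 := Finset.mem_filter.mp hmem.1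
  have hv : v ∈ V ∧ v ∈ Set.Icc b1 b2 := Finset.mem_filter.mp hmem.2
  refine ⟨u, v, hu.2, hu.1, hv.2, hv.1, ?_⟩
  have hconv : ∀ c, (u ≤ c ∧ c ≤ v) ∨ (v ≤ c ∧ c ≤ u) →
      c ∈ Set.Icc a1 a2 ∨ c ∈ Set.Icc b1 b2 := by
    intro c hc
    have huab := hu.2; have hvab := hv.2
    obtain ⟨hza1, hza2⟩ := hza
    obtain ⟨hzb1, hzb2⟩ := hzb
    obtain ⟨h1, h2⟩ := huab
    obtain ⟨h3, h4⟩ := hvab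
    rcases le_total c z with hcz | hcz
    · -- c ≤ z ; lower bound from u or v
      rcases hc with ⟨hl, _⟩ | ⟨hl, _⟩
      · exact Or.inl ⟨by linarith, by linarith⟩
      · exact Or.inr ⟨by linarith, by linarith⟩
    · rcases hc with ⟨_, hr⟩ | ⟨_, hr⟩
      · exact Or.inr ⟨by linarith, by linarith⟩
      · exact Or.inl ⟨by linarith, by linarith⟩
  -- minimality helper
  have hminA : ∀ c, c ∈ V → c ∈ Set.Icc a1 a2 → |u - v| ≤ |c - v| := by
    intro c hc1 hc2
    have : (c, v) ∈ A ×ˢ B := by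
      rw [Finset.mem_product]; constructor
      · exact Finset.mem_filter.mpr ⟨hc1, hc2⟩
      · exact hmem.2
    exact hmin _ this
  have hminB : ∀ c, c ∈ V → c ∈ Set.Icc b1 b2 → |u - v| ≤ |u - c| := by
    intro c hc1 hc2
    have : (u, c) ∈ A ×ˢ B := by
      rw [Finset.mem_product]; constructor
      · exact hmem.1
      · exact Finset.mem_filter.mpr ⟨hc1, hc2⟩
    exact hmin _ this
  rcases lt_trichotomy u v with hlt | heq | hgt
  · refine Or.inr (Or.inl ⟨hu.1, hv.1, hlt, ?_⟩)
    rintro c hc ⟨h1, h2⟩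
    have habs : |u - v| = v - u := by rw [abs_of_nonpos (by linarith)]; ring
    rcases hconv c (Or.inl ⟨le_of_lt h1, le_of_lt h2⟩) with hca | hcb
    · have := hminA c hc hca
      rw [habs, abs_of_nonpos (by linarith)] at this; linarith
    · have := hminB c hc hcb
      rw [habs, abs_of_nonpos (by linarith)] at this; linarith
  · exact Or.inl ⟨heq, hu.1⟩
  · refine Or.inr (Or.inr ⟨hv.1, hu.1, hgt, ?_⟩)
    rintro c hc ⟨h1, h2⟩
    have habs : |u - v| = u - v := abs_of_nonneg (by linarith)
    rcases hconv c (Or.inr ⟨le_of_lt h1, le_of_lt h2⟩) with hca | hcb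
    · have := hminA c hc hca
      rw [habs, abs_of_nonneg (by linarith)] at this; linarith
    · have := hminB c hc hcb
      rw [habs, abs_of_nonneg (by linarith)] at this; linarith

/-- if two axis-parallel rectangles each contain a grid point and they
intersect, then they contain adjacent grid points. -/
theorem stmt5 (V Hl : Finset ℝ) (RA RB : Set (ℝ × ℝ)) (hA : IsRect RA) (hB : IsRect RB)
    (hAp : (RA ∩ gridPoints V Hl).Nonempty) (hBp : (RB ∩ gridPoints V Hl).Nonempty)
    (hint : (RA ∩ RB).Nonempty) :
    ∃ p ∈ RA ∩ gridPoints V Hl, ∃ q ∈ RB ∩ gridPoints V Hl, AdjPts V Hl p q := by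
  obtain ⟨a1, a2, c1, c2, rfl⟩ := hA
  obtain ⟨b1, b2, d1, d2, rfl⟩ := hB
  obtain ⟨p, ⟨hpA, hpG⟩⟩ := hAp
  obtain ⟨q, ⟨hqB, hqG⟩⟩ := hBp
  obtain ⟨z, hzA, hzB⟩ := hint
  rw [Set.mem_prod] at hpA hqB hzA hzB
  obtain ⟨u1, v1, hu1, hu1V, hv1, hv1V, hsc1⟩ :=
    key1 V a1 a2 b1 b2 ⟨p.1, hpA.1, hpG.1⟩ ⟨q.1, hqB.1, hqG.1⟩ ⟨z.1, hzA.1, hzB.1⟩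
  obtain ⟨u2, v2, hu2, hu2V, hv2, hv2V, hsc2⟩ :=
    key1 Hl c1 c2 d1 d2 ⟨p.2, hpA.2, hpG.2⟩ ⟨q.2, hqB.2, hqG.2⟩ ⟨z.2, hzA.2, hzB.2⟩
  exact ⟨(u1, u2), ⟨⟨hu1, hu2⟩, ⟨hu1V, hu2V⟩⟩, (v1, v2), ⟨⟨hv1, hv2⟩, ⟨hv1V, hv2V⟩⟩,
    hsc1, hsc2⟩
end

section
/- For all vertices A, B of the Gaifman graph H, the distance between A and B in the modified graph H• satisfies dist_{H•}(A,B) ≤ 2·dist_H(A,B). -/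
open Finset

/-- `Q` is the set of corners of a grid cell of the grid `(V, Hl)`: a bounded cell has four
corners; cells in boundary strips have two corners; quadrant cells have one corner. -/
def IsCellCorners (V Hl : Finset ℝ) (Q : Set (ℝ × ℝ)) : Prop :=
  (∃ a b c d : ℝ, Consec V a b ∧ Consec Hl c d ∧
      Q = {(a, c), (a, d), (b, c), (b, d)}) ∨
  (∃ a c d : ℝ, a ∈ V ∧ ((∀ x ∈ V, a ≤ x) ∨ (∀ x ∈ V, x ≤ a)) ∧ Consec Hl c d ∧
      Q = {(a, c), (a, d)}) ∨
  (∃ a b c : ℝ, Consec V a b ∧ c ∈ Hl ∧ ((∀ y ∈ Hl, c ≤ y) ∨ (∀ y ∈ Hl, y ≤ c)) ∧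
      Q = {(a, c), (b, c)}) ∨
  (∃ a c : ℝ, a ∈ V ∧ c ∈ Hl ∧ ((∀ x ∈ V, a ≤ x) ∨ (∀ x ∈ V, x ≤ a)) ∧
      ((∀ y ∈ Hl, c ≤ y) ∨ (∀ y ∈ Hl, y ≤ c)) ∧ Q = {(a, c)})

/-- The Gaifman graph `H` on the family `T` of sets of grid points: `A` and `B` are
adjacent iff some grid cell has a corner in `A` and a corner in `B`. -/
def gaifman (V Hl : Finset ℝ) (T : Set (Set (ℝ × ℝ))) : SimpleGraph T :=
  SimpleGraph.fromRel (fun A B => ∃ Q : Set (ℝ × ℝ), IsCellCorners V Hl Q ∧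
    ((A : Set (ℝ × ℝ)) ∩ Q).Nonempty ∧ ((B : Set (ℝ × ℝ)) ∩ Q).Nonempty)

/-- `q = (a, b, c, d)` encodes a cross: a bounded cell (x-range `[a,b]`, y-range `[c,d]`)
whose four corners lie in four pairwise different elements of `T`. -/
def IsCross (V Hl : Finset ℝ) (T : Set (Set (ℝ × ℝ))) (q : ℝ × ℝ × ℝ × ℝ) : Prop :=
  Consec V q.1 q.2.1 ∧ Consec Hl q.2.2.1 q.2.2.2 ∧
  ∃ A1 ∈ T, ∃ A2 ∈ T, ∃ A3 ∈ T, ∃ A4 ∈ T,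
    (q.1, q.2.2.2) ∈ A1 ∧ (q.2.1, q.2.2.2) ∈ A2 ∧
    (q.1, q.2.2.1) ∈ A3 ∧ (q.2.1, q.2.2.1) ∈ A4 ∧
    A1 ≠ A2 ∧ A1 ≠ A3 ∧ A1 ≠ A4 ∧ A2 ≠ A3 ∧ A2 ≠ A4 ∧ A3 ≠ A4

/-- `A` and `B` contain two opposite corners of some cross. -/
def DiagonalPair (V Hl : Finset ℝ) (T : Set (Set (ℝ × ℝ))) (A B : Set (ℝ × ℝ)) : Prop :=
  ∃ q : ℝ × ℝ × ℝ × ℝ, IsCross V Hl T q ∧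
    (((q.1, q.2.2.2) ∈ A ∧ (q.2.1, q.2.2.1) ∈ B) ∨
     ((q.1, q.2.2.2) ∈ B ∧ (q.2.1, q.2.2.1) ∈ A) ∨
     ((q.2.1, q.2.2.2) ∈ A ∧ (q.1, q.2.2.1) ∈ B) ∨
     ((q.2.1, q.2.2.2) ∈ B ∧ (q.1, q.2.2.1) ∈ A))

/-- The modified graph `H•`: for each cross add a new vertex adjacent to the four elements
of `T` containing its corners, and delete the two diagonal edges of the cross. -/
def gaifmanDot (V Hl : Finset ℝ) (T : Set (Set (ℝ × ℝ))) :
    SimpleGraph (T ⊕ {q : ℝ × ℝ × ℝ × ℝ // IsCross V Hl T q}) :=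
  SimpleGraph.fromRel (fun u v =>
    match u, v with
    | Sum.inl A, Sum.inl B =>
        (gaifman V Hl T).Adj A B ∧ ¬ DiagonalPair V Hl T (A : Set (ℝ × ℝ)) (B : Set (ℝ × ℝ))
    | Sum.inl A, Sum.inr q =>
        (q.1.1, q.1.2.2.2) ∈ (A : Set (ℝ × ℝ)) ∨ (q.1.2.1, q.1.2.2.2) ∈ (A : Set (ℝ × ℝ)) ∨
        (q.1.1, q.1.2.2.1) ∈ (A : Set (ℝ × ℝ)) ∨ (q.1.2.1, q.1.2.2.1) ∈ (A : Set (ℝ × ℝ))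
    | Sum.inr _, _ => False)

/-- Graph minors: `G` is a minor of `G'` if there are pairwise disjoint connected branch
sets in `G'`, one for each vertex of `G`, with edges of `G` realized between branch sets. -/
def IsMinorOf {α β : Type} (G : SimpleGraph α) (G' : SimpleGraph β) : Prop :=
  ∃ f : α → Set β,
    (∀ a, (G'.induce (f a)).Connected) ∧
    (∀ a a', a ≠ a' → Disjoint (f a) (f a')) ∧
    (∀ a a', G.Adj a a' → ∃ x ∈ f a, ∃ y ∈ f a', G'.Adj x y)

/-- Planarity, via Wagner's forbidden-minor characterization. -/
def IsPlanar {α : Type} (G : SimpleGraph α) : Prop :=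
  ¬ IsMinorOf (SimpleGraph.completeGraph (Fin 5)) G ∧
  ¬ IsMinorOf (completeBipartiteGraph (Fin 3) (Fin 3)) G

/-
Each edge of `H` survives in `H•` unless it is a diagonal of a cross, and then the cross vertex
joins its ends by a path of length two; so every walk of `H` lifts to a walk of `H•` of at most
twice the length. Conversely, collapsing each cross vertex onto one of the parts containing a
corner of its cell maps edges of `H•` to edges or loops of `H`, so vertices of `T` that are
disconnected in `H` (where `dist` is `0` by convention) are disconnected in `H•` as well.
-/

namespace SimpleGraph

variable {α β : Type*} {G : SimpleGraph α} {G' : SimpleGraph β}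

theorem Reachable.map_of_forall_adj (f : β → α)
    (h : ∀ x y, G'.Adj x y → G.Reachable (f x) (f y)) {x y : β} (hxy : G'.Reachable x y) :
    G.Reachable (f x) (f y) := by
  rw [reachable_iff_reflTransGen] at hxy ⊢
  exact Relation.ReflTransGen.lift' f
    (fun x y hxy ↦ (reachable_iff_reflTransGen _ _).1 (h x y hxy)) _ _ hxy

theorem exists_walk_length_le_mul_of_forall_adj (φ : α → β) (k : ℕ)
    (h : ∀ a b, G.Adj a b → ∃ w : G'.Walk (φ a) (φ b), w.length ≤ k) {a b : α}
    (p : G.Walk a b) :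
    ∃ w : G'.Walk (φ a) (φ b), w.length ≤ k * p.length := by
  induction p with
  | nil => exact ⟨Walk.nil, by simp⟩
  | cons hadj _ ih =>
    obtain ⟨w₁, hw₁⟩ := h _ _ hadj
    obtain ⟨w₂, hw₂⟩ := ih
    refine ⟨w₁.append w₂, ?_⟩
    rw [Walk.length_append, Walk.length_cons, Nat.mul_succ]
    omega

theorem dist_le_mul_dist_of_forall_adj (φ : α → β) (k : ℕ)
    (h_adj : ∀ a b, G.Adj a b → ∃ w : G'.Walk (φ a) (φ b), w.length ≤ k)
    (h_reach : ∀ a b, G'.Reachable (φ a) (φ b) → G.Reachable a b) (a b : α) :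
    G'.dist (φ a) (φ b) ≤ k * G.dist a b := by
  by_cases hab : G.Reachable a b
  · obtain ⟨p, hp⟩ := hab.exists_walk_length_eq_dist
    obtain ⟨w, hw⟩ := exists_walk_length_le_mul_of_forall_adj φ k h_adj p
    exact (dist_le w).trans (hp ▸ hw)
  · rw [dist_eq_zero_of_not_reachable (mt (h_reach a b) hab)]
    exact Nat.zero_le _

end SimpleGraph

section GaifmanDot

variable {V Hl : Finset ℝ} {T : Set (Set (ℝ × ℝ))}

def cellCorners (q : ℝ × ℝ × ℝ × ℝ) : Set (ℝ × ℝ) :=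
  {(q.1, q.2.2.1), (q.1, q.2.2.2), (q.2.1, q.2.2.1), (q.2.1, q.2.2.2)}

lemma IsCross.isCellCorners {q : ℝ × ℝ × ℝ × ℝ} (hq : IsCross V Hl T q) :
    IsCellCorners V Hl (cellCorners q) :=
  Or.inl ⟨q.1, q.2.1, q.2.2.1, q.2.2.2, hq.1, hq.2.1, rfl⟩

lemma gaifman_adj_of_isCellCorners {A B : T} (hAB : A ≠ B) {Q : Set (ℝ × ℝ)}
    (hQ : IsCellCorners V Hl Q) (hA : ((A : Set (ℝ × ℝ)) ∩ Q).Nonempty)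
    (hB : ((B : Set (ℝ × ℝ)) ∩ Q).Nonempty) : (gaifman V Hl T).Adj A B := by
  rw [gaifman, SimpleGraph.fromRel_adj]
  exact ⟨hAB, Or.inl ⟨Q, hQ, hA, hB⟩⟩

lemma gaifmanDot_adj_inl_inl_of_not_diagonalPair {A B : T} (h : (gaifman V Hl T).Adj A B)
    (hd : ¬ DiagonalPair V Hl T A B) : (gaifmanDot V Hl T).Adj (Sum.inl A) (Sum.inl B) := by
  rw [gaifmanDot, SimpleGraph.fromRel_adj]
  exact ⟨by simpa using h.ne, Or.inl ⟨h, hd⟩⟩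

lemma gaifman_adj_of_gaifmanDot_adj_inl_inl {A B : T}
    (h : (gaifmanDot V Hl T).Adj (Sum.inl A) (Sum.inl B)) : (gaifman V Hl T).Adj A B := by
  rw [gaifmanDot, SimpleGraph.fromRel_adj] at h
  rcases h with ⟨-, h | h⟩
  · exact h.1
  · exact h.1.symm

lemma gaifmanDot_adj_inl_inr_iff {A : T} {q : {q : ℝ × ℝ × ℝ × ℝ // IsCross V Hl T q}} :
    (gaifmanDot V Hl T).Adj (Sum.inl A) (Sum.inr q) ↔
      ((A : Set (ℝ × ℝ)) ∩ cellCorners q.1).Nonempty := by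
  rw [gaifmanDot, SimpleGraph.fromRel_adj]
  simp only [ne_eq, reduceCtorEq, not_false_eq_true, or_false, true_and]
  constructor
  · rintro (h | h | h | h) <;> exact ⟨_, h, by simp [cellCorners]⟩
  · rintro ⟨p, hpA, hp⟩
    simp only [cellCorners, Set.mem_insert_iff, Set.mem_singleton_iff] at hp
    rcases hp with rfl | rfl | rfl | rfl <;> tauto

lemma gaifmanDot_not_adj_inr_inr {q q' : {q : ℝ × ℝ × ℝ × ℝ // IsCross V Hl T q}} :
    ¬ (gaifmanDot V Hl T).Adj (Sum.inr q) (Sum.inr q') := by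
  rw [gaifmanDot, SimpleGraph.fromRel_adj]
  rintro ⟨-, h | h⟩ <;> exact h

lemma exists_gaifmanDot_walk_length_le_two {A B : T} (h : (gaifman V Hl T).Adj A B) :
    ∃ w : (gaifmanDot V Hl T).Walk (Sum.inl A) (Sum.inl B), w.length ≤ 2 := by
  by_cases hd : DiagonalPair V Hl T A B
  · obtain ⟨q, hq, hcase⟩ := hd
    have hA : (gaifmanDot V Hl T).Adj (Sum.inl A) (Sum.inr ⟨q, hq⟩) := by
      rw [gaifmanDot_adj_inl_inr_iff]
      rcases hcase with ⟨h, -⟩ | ⟨-, h⟩ | ⟨h, -⟩ | ⟨-, h⟩ <;>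
        exact ⟨_, h, by simp [cellCorners]⟩
    have hB : (gaifmanDot V Hl T).Adj (Sum.inl B) (Sum.inr ⟨q, hq⟩) := by
      rw [gaifmanDot_adj_inl_inr_iff]
      rcases hcase with ⟨-, h⟩ | ⟨h, -⟩ | ⟨-, h⟩ | ⟨h, -⟩ <;>
        exact ⟨_, h, by simp [cellCorners]⟩
    exact ⟨.cons hA (.cons hB.symm .nil), by simp⟩
  · exact ⟨.cons (gaifmanDot_adj_inl_inl_of_not_diagonalPair h hd) .nil, by simp⟩

noncomputable def IsCross.topLeftPart {q : ℝ × ℝ × ℝ × ℝ} (hq : IsCross V Hl T q) : T :=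
  ⟨hq.2.2.choose, hq.2.2.choose_spec.1⟩

lemma IsCross.topLeftPart_inter_cellCorners_nonempty {q : ℝ × ℝ × ℝ × ℝ}
    (hq : IsCross V Hl T q) :
    ((hq.topLeftPart : Set (ℝ × ℝ)) ∩ cellCorners q).Nonempty := by
  obtain ⟨-, -, -, -, -, -, -, h, -⟩ := hq.2.2.choose_spec
  exact ⟨_, h, by simp [cellCorners]⟩

noncomputable def gaifmanDotRetract :
    T ⊕ {q : ℝ × ℝ × ℝ × ℝ // IsCross V Hl T q} → T :=
  Sum.elim id fun q ↦ q.2.topLeftPart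

lemma gaifman_reachable_of_gaifmanDot_adj_inl {A : T} {x : T ⊕ {q // IsCross V Hl T q}}
    (h : (gaifmanDot V Hl T).Adj (Sum.inl A) x) :
    (gaifman V Hl T).Reachable A (gaifmanDotRetract x) := by
  rcases x with B | q
  · exact (gaifman_adj_of_gaifmanDot_adj_inl_inl h).reachable
  · by_cases hA : A = q.2.topLeftPart
    · exact hA ▸ .rfl
    · exact (gaifman_adj_of_isCellCorners hA q.2.isCellCorners
        (gaifmanDot_adj_inl_inr_iff.1 h) q.2.topLeftPart_inter_cellCorners_nonempty).reachable

lemma gaifman_reachable_of_gaifmanDot_adj {x y : T ⊕ {q // IsCross V Hl T q}}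
    (h : (gaifmanDot V Hl T).Adj x y) :
    (gaifman V Hl T).Reachable (gaifmanDotRetract x) (gaifmanDotRetract y) := by
  rcases x with A | q
  · exact gaifman_reachable_of_gaifmanDot_adj_inl h
  · rcases y with B | q'
    · exact (gaifman_reachable_of_gaifmanDot_adj_inl h.symm).symm
    · exact absurd h gaifmanDot_not_adj_inr_inr

end GaifmanDot

theorem stmt7_general (V Hl : Finset ℝ) (T : Set (Set (ℝ × ℝ))) :
    ∀ A B : T, (gaifmanDot V Hl T).dist (Sum.inl A) (Sum.inl B) ≤
      2 * (gaifman V Hl T).dist A B :=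
  SimpleGraph.dist_le_mul_dist_of_forall_adj Sum.inl 2
    (fun _ _ ↦ exists_gaifmanDot_walk_length_le_two)
    fun _ _ h ↦ h.map_of_forall_adj gaifmanDotRetract fun _ _ ↦
      gaifman_reachable_of_gaifmanDot_adj

/-- distances in `H•` are at most twice the distances in `H`. -/
theorem stmt7 (V Hl : Finset ℝ) (T : Set (Set (ℝ × ℝ)))
    (hne : ∀ A ∈ T, A.Nonempty) (hsub : ∀ A ∈ T, A ⊆ gridPoints V Hl)
    (hdisj : T.Pairwise Disjoint) :
    ∀ A B : T, (gaifmanDot V Hl T).dist (Sum.inl A) (Sum.inl B) ≤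
      2 * (gaifman V Hl T).dist A B :=
  stmt7_general V Hl T
end

section
/- Suppose every optimum solution (maximum-weight independent set of cardinality at most k) of a finite set D of axis-parallel segments contains the ⪯-minimum segment of D, where ⪯ refines the weight order. Then there exists a grid of at most k lines (the lines containing the segments of any optimum solution) that hits every segment in D. -/
open Finset

/-- The grid with vertical lines `V` and horizontal lines `Hs` hits the set `R`. -/
def HitsGrid (V Hs : Finset ℝ) (R : Set (ℝ × ℝ)) : Prop :=
  (∃ x ∈ V, ∃ p ∈ R, p.1 = x) ∨ (∃ y ∈ Hs, ∃ p ∈ R, p.2 = y)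

/-- Lines through a finite family of segments. -/
lemma grid_exists (S : Finset (Set (ℝ × ℝ))) (hseg : ∀ T ∈ S, IsSeg T) :
    ∃ V Hs : Finset ℝ, V.card + Hs.card ≤ S.card ∧
      ∀ T ∈ S, ∀ p ∈ T, p.1 ∈ V ∨ p.2 ∈ Hs := by
  classical
  induction S using Finset.induction_on with
  | empty => exact ⟨∅, ∅, by simp, by simp⟩
  | @insert a s ha ih =>
    obtain ⟨V, Hs, hcard, hmem⟩ := ih (fun T hT => hseg T (mem_insert_of_mem hT))
    obtain ⟨x1, x2, y1, y2, hor, hEq⟩ := hseg a (mem_insert_self a s)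
    rcases hor with h | h
    · refine ⟨insert x1 V, Hs, ?_, ?_⟩
      · calc (insert x1 V).card + Hs.card ≤ V.card + 1 + Hs.card := by
              have := card_insert_le x1 V; omega
          _ ≤ s.card + 1 := by omega
          _ = (insert a s).card := (card_insert_of_notMem ha).symm
      · intro T hT p hp
        rcases mem_insert.1 hT with rfl | hT
        · left
          rw [hEq] at hp
          have h1 : p.1 ∈ Set.Icc x1 x2 := hp.1
          have : p.1 = x1 := le_antisymm (h ▸ h1.2) h1.1
          rw [this]; exact mem_insert_self _ _
        · rcases hmem T hT p hp with h1 | h2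
          · exact Or.inl (mem_insert_of_mem h1)
          · exact Or.inr h2
    · refine ⟨V, insert y1 Hs, ?_, ?_⟩
      · calc V.card + (insert y1 Hs).card ≤ V.card + (Hs.card + 1) := by
              have := card_insert_le y1 Hs; omega
          _ ≤ s.card + 1 := by omega
          _ = (insert a s).card := (card_insert_of_notMem ha).symm
      · intro T hT p hp
        rcases mem_insert.1 hT with rfl | hT
        · right
          rw [hEq] at hp
          have h1 : p.2 ∈ Set.Icc y1 y2 := hp.2
          have : p.2 = y1 := le_antisymm (h ▸ h1.2) h1.1
          rw [this]; exact mem_insert_self _ _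
        · rcases hmem T hT p hp with h1 | h2
          · exact Or.inl h1
          · exact Or.inr (mem_insert_of_mem h2)

/-- The optimum is attained and is an upper bound. -/
lemma optk_spec (D : Finset (Set (ℝ × ℝ))) (ω : Set (ℝ × ℝ) → ℝ) (k : ℕ) :
    ∃ S : Finset (Set (ℝ × ℝ)), IsSolution D k S ∧ ∑ R ∈ S, ω R = optk D ω k ∧
      ∀ S' : Finset (Set (ℝ × ℝ)), IsSolution D k S' → ∑ R ∈ S', ω R ≤ optk D ω k := by
  classical
  set W : Finset ℝ :=
    (D.powerset.filter (fun (S : Finset (Set (ℝ × ℝ))) => S.card ≤ k ∧ (↑S : Set (Set (ℝ × ℝ))).Pairwise Disjoint)).image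
      (fun S => ∑ R ∈ S, ω R) with hW
  have hset : {w : ℝ | ∃ S : Finset (Set (ℝ × ℝ)), IsSolution D k S ∧ w = ∑ R ∈ S, ω R}
      = (↑W : Set ℝ) := by
    ext w
    simp only [hW, Set.mem_setOf_eq, coe_image, Set.mem_image, mem_coe, mem_filter,
      mem_powerset, IsSolution]
    constructor
    · rintro ⟨S, ⟨h1, h2, h3⟩, rfl⟩; exact ⟨S, ⟨h1, h2, h3⟩, rfl⟩
    · rintro ⟨S, ⟨h1, h2, h3⟩, rfl⟩; exact ⟨S, ⟨h1, h2, h3⟩, rfl⟩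
  have hWne : W.Nonempty := by
    refine ⟨∑ R ∈ (∅ : Finset (Set (ℝ × ℝ))), ω R, ?_⟩
    simp only [hW, mem_image, mem_filter, mem_powerset]
    exact ⟨∅, ⟨empty_subset _, by simp, by simp⟩, by simp⟩
  have hopt : optk D ω k = W.max' hWne := by
    rw [optk, hset, hWne.csSup_eq_max']
  have hmax : W.max' hWne ∈ W := max'_mem W hWne
  simp only [hW, mem_image, mem_filter, mem_powerset] at hmax
  obtain ⟨S, ⟨h1, h2, h3⟩, hS⟩ := hmax
  refine ⟨S, ⟨h1, h2, h3⟩, by rw [hopt, hS], ?_⟩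
  intro S' hS'
  rw [hopt]
  apply le_max'
  simp only [hW, mem_image, mem_filter, mem_powerset]
  exact ⟨S', ⟨hS'.1, hS'.2.1, hS'.2.2⟩, rfl⟩

/-- if every optimum solution contains the `⪯`-minimum segment `R0` of `D`
(`⪯` encoded by a rank function `ρ` refining the weight order), then there is a grid of at
most `k` lines hitting every segment of `D`. -/
theorem stmt13 (D : Finset (Set (ℝ × ℝ))) (ω : Set (ℝ × ℝ) → ℝ) (k : ℕ) (hk : 0 < k)
    (hseg : ∀ R ∈ D, IsSeg R) (hne : ∀ R ∈ D, R.Nonempty) (hpos : ∀ R ∈ D, 0 < ω R)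
    (ρ : Set (ℝ × ℝ) → ℕ) (hinj : Set.InjOn ρ (↑D : Set (Set (ℝ × ℝ))))
    (hrefine : ∀ R ∈ D, ∀ R' ∈ D, ω R < ω R' → ρ R < ρ R')
    (R0 : Set (ℝ × ℝ)) (hR0 : R0 ∈ D) (hmin : ∀ R ∈ D, ρ R0 ≤ ρ R)
    (hall : ∀ S : Finset (Set (ℝ × ℝ)), IsSolution D k S →
      ∑ R ∈ S, ω R = optk D ω k → R0 ∈ S) :
    ∃ V Hs : Finset ℝ, V.card + Hs.card ≤ k ∧ ∀ R ∈ D, HitsGrid V Hs R := by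
  classical
  obtain ⟨S, hSsol, hSopt, hub⟩ := optk_spec D ω k
  obtain ⟨V, Hs, hcard, hmem⟩ := grid_exists S (fun T hT => hseg T (hSsol.1 hT))
  refine ⟨V, Hs, le_trans hcard hSsol.2.1, ?_⟩
  intro R hRD
  by_contra hnot
  -- R is disjoint from every member of S
  have hRdisj : ∀ T ∈ S, Disjoint R T := by
    intro T hT
    rw [Set.disjoint_left]
    intro p hpR hpT
    rcases hmem T hT p hpT with hx | hy
    · exact hnot (Or.inl ⟨p.1, hx, p, hpR, rfl⟩)
    · exact hnot (Or.inr ⟨p.2, hy, p, hpR, rfl⟩)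
  have hRne : R.Nonempty := hne R hRD
  have hRnotS : R ∉ S := by
    intro hRS
    have := hRdisj R hRS
    rw [disjoint_self] at this
    exact hRne.ne_empty this
  have hR0S : R0 ∈ S := hall S hSsol hSopt
  set S' : Finset (Set (ℝ × ℝ)) := insert R (S.erase R0) with hS'
  have hRnotE : R ∉ S.erase R0 := fun h => hRnotS (mem_of_mem_erase h)
  have hS'sol : IsSolution D k S' := by
    refine ⟨?_, ?_, ?_⟩
    · intro T hT
      rcases mem_insert.1 hT with rfl | hT
      · exact hRD
      · exact hSsol.1 (mem_of_mem_erase hT)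
    · rw [hS', card_insert_of_notMem hRnotE, card_erase_of_mem hR0S]
      have hc : 1 ≤ S.card := card_pos.2 ⟨R0, hR0S⟩
      have hk2 : S.card ≤ k := hSsol.2.1
      omega
    · intro a ha b hb hab
      simp only [hS', coe_insert, Set.mem_insert_iff, mem_coe] at ha hb
      rcases ha with rfl | ha
      · rcases hb with rfl | hb
        · exact absurd rfl hab
        · exact hRdisj b (mem_of_mem_erase hb)
      · rcases hb with rfl | hb
        · exact (hRdisj a (mem_of_mem_erase ha)).symm
        · exact hSsol.2.2 (mem_coe.2 (mem_of_mem_erase ha))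
            (mem_coe.2 (mem_of_mem_erase hb)) hab
  have hsum : ∑ T ∈ S', ω T = ω R + (∑ T ∈ S, ω T - ω R0) := by
    rw [hS', sum_insert hRnotE]
    have := Finset.sum_erase_add S ω hR0S
    linarith
  have hle : ∑ T ∈ S', ω T ≤ optk D ω k := hub S' hS'sol
  by_cases hw : ω R0 ≤ ω R
  · have heq : ∑ T ∈ S', ω T = optk D ω k := by
      rw [← hSopt]; rw [← hSopt] at hle; linarith [hsum]
    have hR0S' : R0 ∈ S' := hall S' hS'sol heq
    rcases mem_insert.1 hR0S' with h | h
    · exact hRnotS (h ▸ hR0S)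
    · exact (notMem_erase R0 S) h
  · push_neg at hw
    have := hrefine R hRD R0 hR0 hw
    have := hmin R hRD
    omega
end

section
/- Consider the greedy sweep procedure that repeatedly: finds the least x-coordinate x_i such that segments entirely in (−∞, x_i]×ℝ (among remaining segments) cannot be hit by k horizontal lines, adds those k horizontal lines plus the vertical line at x_i to the grid, and removes all hit segments. If this procedure performs more than k+1 iterations, then no grid of size at most k hits all segments of D; and if it performs at most k+1 iterations, the constructed grid has size at most (k+1)² and hits all segments of D. -/
open Finset

/-- the greedy sweep procedure (with trace: remaining segments `rem i`,
sweep positions `x i`, chosen horizontal lines `hs i`, over `ℓ` iterations).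
If it performs more than `k+1` iterations, no grid of size at most `k` hits all of `D`;
if it performs at most `k+1` iterations, the constructed grid has size at most `(k+1)²`
and hits all segments of `D`. -/
theorem stmt14 (D : Finset (Set (ℝ × ℝ))) (k : ℕ)
    (hseg : ∀ R ∈ D, IsSeg R) (hne : ∀ R ∈ D, R.Nonempty)
    (ℓ : ℕ) (hℓ : 0 < ℓ)
    (x : ℕ → ℝ) (rem : ℕ → Finset (Set (ℝ × ℝ))) (hs : ℕ → Finset ℝ)
    (hrem0 : rem 0 = D)
    -- in each non-final iteration, the remaining segments entirely in `(-∞, x i]` cannot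
    -- be hit by `k` horizontal lines…
    (hcant : ∀ i, i < ℓ - 1 → ¬ ∃ Hs : Finset ℝ, Hs.card ≤ k ∧
      ∀ R ∈ rem i, (∀ p ∈ R, p.1 ≤ x i) → ∃ p ∈ R, p.2 ∈ Hs)
    -- …and `x i` is least such:
    (hleast : ∀ i, i < ℓ - 1 → ∀ a : ℝ, a < x i → ∃ Hs : Finset ℝ, Hs.card ≤ k ∧
      ∀ R ∈ rem i, (∀ p ∈ R, p.1 ≤ a) → ∃ p ∈ R, p.2 ∈ Hs)
    (hcard : ∀ i, i < ℓ → (hs i).card ≤ k)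
    -- the chosen `k` horizontal lines hit everything remaining strictly left of `x i`:
    (hcover : ∀ i, i < ℓ - 1 → ∀ R ∈ rem i, (∀ p ∈ R, p.1 < x i) → ∃ p ∈ R, p.2 ∈ hs i)
    -- segments hit by the chosen horizontal lines or by the vertical line at `x i`
    -- are removed:
    (hstep : ∀ i, i < ℓ - 1 → ∀ R, R ∈ rem (i + 1) ↔
      R ∈ rem i ∧ ¬ (∃ p ∈ R, p.2 ∈ hs i) ∧ ¬ (∃ p ∈ R, p.1 = x i))
    -- final iteration: all remaining segments are hit by at most `k` horizontal lines:
    (hfinal : ∀ R ∈ rem (ℓ - 1), ∃ p ∈ R, p.2 ∈ hs (ℓ - 1)) :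
    (k + 1 < ℓ →
      ¬ ∃ V Hs : Finset ℝ, V.card + Hs.card ≤ k ∧ ∀ R ∈ D, HitsGrid V Hs R) ∧
    (ℓ ≤ k + 1 →
      ((Finset.range (ℓ - 1)).image x).card + ((Finset.range ℓ).biUnion hs).card ≤
        (k + 1) ^ 2 ∧
      ∀ R ∈ D, HitsGrid ((Finset.range (ℓ - 1)).image x) ((Finset.range ℓ).biUnion hs) R) := by

  classical
  -- rem i ⊆ D for all relevant i
  have hremD : ∀ i, i ≤ ℓ - 1 → rem i ⊆ D := by
    intro i
    induction i with
    | zero => intro _; rw [hrem0]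
    | succ j ih =>
      intro hj R hR
      have hjlt : j < ℓ - 1 := Nat.lt_of_succ_le hj
      exact ih (le_of_lt hjlt) (((hstep j hjlt R).mp hR).1)
  -- every segment surviving a step is entirely strictly right of x j
  have hright : ∀ j, j < ℓ - 1 → ∀ R ∈ rem (j+1), ∀ p ∈ R, x j < p.1 := by
    intro j hj R hR p hp
    obtain ⟨hRj, hnh, hnv⟩ := (hstep j hj R).mp hR
    have hnotall : ¬ ∀ q ∈ R, q.1 < x j := fun h => hnh (hcover j hj R hRj h)
    push_neg at hnotall
    obtain ⟨q, hq, hqx⟩ := hnotall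
    obtain ⟨x1, x2, y1, y2, _, hReq⟩ := hseg R (hremD j (le_of_lt hj) hRj)
    by_contra hle
    push_neg at hle
    apply hnv
    refine ⟨(x j, p.2), ?_, rfl⟩
    rw [hReq] at hp hq ⊢
    obtain ⟨hp1, hp2⟩ := hp
    obtain ⟨hq1, _⟩ := hq
    exact ⟨⟨le_trans hp1.1 hle, le_trans hqx hq1.2⟩, hp2⟩
  constructor
  · -- Part 1
    intro hkl
    rintro ⟨V, Hs, hcardVH, hhits⟩
    have hHs : Hs.card ≤ k := by omega
    have hV : V.card ≤ k := by omega
    have key : ∀ i, ∃ v, i < ℓ - 1 →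
        v ∈ V ∧ v ≤ x i ∧ (∀ j, i = j + 1 → x j < v) := by
      intro i
      by_cases hi : i < ℓ - 1
      · have h1 := hcant i hi
        have h2 : ¬ (Hs.card ≤ k ∧ ∀ R ∈ rem i, (∀ p ∈ R, p.1 ≤ x i) → ∃ p ∈ R, p.2 ∈ Hs) :=
          fun h => h1 ⟨Hs, h⟩
        push_neg at h2
        obtain ⟨R, hRi, hRleft, hRnoh⟩ := h2 hHs
        rcases hhits R (hremD i (le_of_lt hi) hRi) with ⟨v, hvV, p, hpR, hpv⟩ |
          ⟨y, hyH, p, hpR, hpy⟩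
        · refine ⟨v, fun _ => ⟨hvV, ?_, ?_⟩⟩
          · rw [← hpv]; exact hRleft p hpR
          · intro j hij
            rw [← hpv]
            subst hij
            exact hright j (by omega) R hRi p hpR
        · exact absurd (by rw [hpy]; exact hyH) (hRnoh p hpR)
      · exact ⟨0, fun h => absurd h hi⟩
    choose f hf using key
    have hmono : ∀ i j, i ≤ j → j < ℓ - 1 → x i ≤ x j := by
      intro i j hij hj
      induction j with
      | zero => have : i = 0 := by omega
                subst this; exact le_rfl
      | succ m ih =>
        rcases Nat.lt_or_ge i (m+1) with h | h
        · have h2 := (hf (m+1) hj).2.2 m rfl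
          have h3 := (hf (m+1) hj).2.1
          exact le_trans (ih (by omega) (by omega)) (le_of_lt (lt_of_lt_of_le h2 h3))
        · have : i = m + 1 := by omega
          subst this; exact le_rfl
    have hfstrict : ∀ i j, i < j → j < ℓ - 1 → f i < f j := by
      intro i j hij hj
      have hi : i < ℓ - 1 := lt_trans hij hj
      have h1 : f i ≤ x i := (hf i hi).2.1
      obtain ⟨m, rfl⟩ : ∃ m, j = m + 1 := ⟨j - 1, by omega⟩
      have h2 : x m < f (m+1) := (hf (m+1) hj).2.2 m rfl
      have h3 : x i ≤ x m := hmono i m (by omega) (by omega)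
      linarith
    have hsub : (Finset.range (k+1)).image f ⊆ V := by
      intro v hv
      simp only [Finset.mem_image, Finset.mem_range] at hv
      obtain ⟨i, hi, rfl⟩ := hv
      exact (hf i (by omega)).1
    have hcardim : ((Finset.range (k+1)).image f).card = k + 1 := by
      rw [Finset.card_image_of_injOn, Finset.card_range]
      intro a ha b hb hab
      simp only [Finset.coe_range, Set.mem_Iio] at ha hb
      by_contra hne
      rcases lt_or_gt_of_ne hne with h | h
      · exact absurd hab (ne_of_lt (hfstrict a b h (by omega)))
      · exact absurd hab.symm (ne_of_lt (hfstrict b a h (by omega)))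
    have := Finset.card_le_card hsub
    omega
  · -- Part 2
    intro hlk
    constructor
    · have h1 : ((Finset.range (ℓ-1)).image x).card ≤ ℓ - 1 := by
        refine le_trans Finset.card_image_le ?_
        rw [Finset.card_range]
      have h2 : ((Finset.range ℓ).biUnion hs).card ≤ ℓ * k := by
        refine le_trans Finset.card_biUnion_le ?_
        calc ∑ i ∈ Finset.range ℓ, (hs i).card
            ≤ ∑ _i ∈ Finset.range ℓ, k :=
              Finset.sum_le_sum (fun i hi => hcard i (Finset.mem_range.mp hi))
          _ = ℓ * k := by rw [Finset.sum_const, Finset.card_range, smul_eq_mul]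
      have e1 : (k+1)^2 = k*k + 2*k + 1 := by ring
      have e2 : ℓ * k ≤ (k+1) * k := Nat.mul_le_mul_right k hlk
      have e3 : (k+1)*k = k*k + k := by ring
      omega
    · intro R hR
      have main : ∀ j, j ≤ ℓ - 1 →
          HitsGrid ((Finset.range (ℓ - 1)).image x) ((Finset.range ℓ).biUnion hs) R ∨
          R ∈ rem j := by
        intro j
        induction j with
        | zero => intro _; right; rwa [hrem0]
        | succ m ih =>
          intro hj
          have hm : m < ℓ - 1 := Nat.lt_of_succ_le hj
          rcases ih (le_of_lt hm) with h | h
          · exact Or.inl h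
          · by_cases hh : ∃ p ∈ R, p.2 ∈ hs m
            · left; right
              obtain ⟨p, hp, hph⟩ := hh
              exact ⟨p.2, Finset.mem_biUnion.mpr ⟨m, Finset.mem_range.mpr (by omega), hph⟩,
                p, hp, rfl⟩
            · by_cases hv : ∃ p ∈ R, p.1 = x m
              · left; left
                obtain ⟨p, hp, hpv⟩ := hv
                exact ⟨x m, Finset.mem_image.mpr ⟨m, Finset.mem_range.mpr hm, rfl⟩,
                  p, hp, hpv⟩
              · right; exact (hstep m hm R).mpr ⟨h, hh, hv⟩
      rcases main (ℓ-1) le_rfl with h | h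
      · exact h
      · obtain ⟨p, hp, hph⟩ := hfinal R h
        exact Or.inr ⟨p.2,
          Finset.mem_biUnion.mpr ⟨ℓ-1, Finset.mem_range.mpr (by omega), hph⟩, p, hp, rfl⟩
end

section
/- Let G be a grid enclosing a finite set D of weighted axis-parallel segments, and let T be a set of combinatorial types (with respect to G) of a pairwise-disjoint family of segments, each containing a grid point. Then the Gaifman graph of the 2-CSP instance whose variables are types in T and whose constraints bind types t, t' whenever P(t) and P(t') are adjacent intervals of grid points on the same grid line, is a disjoint union of paths. -/
/-!
Two bound types lie on a common grid line and carry disjoint intervals of it, so one interval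
ends at the grid point just before the other one starts. Order the types by `p.1 + p.2` for any
point `p` of their interval; this is monotone along every axis-parallel line. A type then has at
most one bound type above it (the one containing the grid point right after its interval) and at
most one below it, since distinct types have disjoint intervals. Hence every vertex has degree
at most two, and there is no cycle: its highest vertex would have two distinct lower neighbours.
-/

open Finset

/-- `s` is a nonempty interval of consecutive grid points on a horizontal grid line. -/
def IsHInterval (V Hl : Finset ℝ) (s : Set (ℝ × ℝ)) : Prop :=
  ∃ y ∈ Hl, ∃ a ∈ V, ∃ b ∈ V, a ≤ b ∧
    s = {p : ℝ × ℝ | p.1 ∈ V ∧ a ≤ p.1 ∧ p.1 ≤ b ∧ p.2 = y}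

/-- `s` is a nonempty interval of consecutive grid points on a vertical grid line. -/
def IsVInterval (V Hl : Finset ℝ) (s : Set (ℝ × ℝ)) : Prop :=
  ∃ xx ∈ V, ∃ a ∈ Hl, ∃ b ∈ Hl, a ≤ b ∧
    s = {p : ℝ × ℝ | p.2 ∈ Hl ∧ a ≤ p.2 ∧ p.2 ≤ b ∧ p.1 = xx}

/-- Two intervals of grid points on the same horizontal line are adjacent: disjoint, and
some point of one is the `V`-successor of some point of the other. -/
def HAdjIntervals (V Hl : Finset ℝ) (s s' : Set (ℝ × ℝ)) : Prop :=
  Disjoint s s' ∧ ∃ y ∈ Hl, (∀ p ∈ s, p.2 = y) ∧ (∀ p ∈ s', p.2 = y) ∧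
    ∃ u ∈ s, ∃ v ∈ s', Consec V u.1 v.1 ∨ Consec V v.1 u.1

/-- Two intervals of grid points on the same vertical line are adjacent. -/
def VAdjIntervals (V Hl : Finset ℝ) (s s' : Set (ℝ × ℝ)) : Prop :=
  Disjoint s s' ∧ ∃ xx ∈ V, (∀ p ∈ s, p.1 = xx) ∧ (∀ p ∈ s', p.1 = xx) ∧
    ∃ u ∈ s, ∃ v ∈ s', Consec Hl u.2 v.2 ∨ Consec Hl v.2 u.2

/-- The Gaifman graph of the 2-CSP: variables are the types `t : T` (with orientation
`orient t` and set of grid points `P t`); two types are bound iff their point sets are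
adjacent intervals on the same grid line (of the same orientation). -/
def cspGraph (V Hl : Finset ℝ) {T : Type} (P : T → Set (ℝ × ℝ)) (orient : T → Bool) :
    SimpleGraph T :=
  SimpleGraph.fromRel (fun t t' =>
    (orient t = true ∧ orient t' = true ∧ HAdjIntervals V Hl (P t) (P t')) ∨
    (orient t = false ∧ orient t' = false ∧ VAdjIntervals V Hl (P t) (P t')))

namespace SimpleGraph

variable {X α : Type*} [LinearOrder α] {G : SimpleGraph X} {f : X → α}

theorem isAcyclic_of_lower_neighbor_unique (hf : ∀ v w, G.Adj v w → f v ≠ f w)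
    (hlow : ∀ v w₁ w₂, G.Adj v w₁ → G.Adj v w₂ → f w₁ < f v → f w₂ < f v → w₁ = w₂) :
    G.IsAcyclic := by
  classical
  intro v c hc
  -- a vertex of the cycle maximising `f` has both cycle-neighbours below it
  obtain ⟨m, hm, hmax⟩ := c.support.toFinset.exists_max_image f ⟨v, by simp⟩
  rw [List.mem_toFinset] at hm
  set c' := c.rotate m hm
  have hc' : c'.IsCycle := hc.rotate hm
  have hlt : ∀ w, G.Adj m w → w ∈ c'.support → f w < f m := fun w hw hwc =>
    lt_of_le_of_ne (hmax w (by simpa [c'] using hwc)) (hf m w hw).symm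
  have hsnd : G.Adj m c'.snd := c'.adj_snd hc'.not_nil
  have hpen : G.Adj m c'.penultimate := (c'.adj_penultimate hc'.not_nil).symm
  exact hc'.snd_ne_penultimate <| hlow m _ _ hsnd hpen
    (hlt _ hsnd (c'.getVert_mem_support 1)) (hlt _ hpen (c'.getVert_mem_support _))

theorem exists_neighbors_subset_pair (hf : ∀ v w, G.Adj v w → f v ≠ f w)
    (hlow : ∀ v w₁ w₂, G.Adj v w₁ → G.Adj v w₂ → f w₁ < f v → f w₂ < f v → w₁ = w₂)
    (hup : ∀ v w₁ w₂, G.Adj v w₁ → G.Adj v w₂ → f v < f w₁ → f v < f w₂ → w₁ = w₂)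
    (v : X) : ∃ u w, ∀ x, G.Adj v x → x = u ∨ x = w := by
  have unique_of_subsingleton : ∀ q : X → Prop, (∀ a b, q a → q b → a = b) →
      ∃ u, ∀ x, q x → x = u := by
    intro q hq
    by_cases h : ∃ x, q x
    · obtain ⟨u, hu⟩ := h
      exact ⟨u, fun x hx => hq x u hx hu⟩
    · exact ⟨v, fun x hx => absurd ⟨x, hx⟩ h⟩
  obtain ⟨u, hu⟩ := unique_of_subsingleton (fun x => G.Adj v x ∧ f x < f v)
    fun a b ha hb => hlow v a b ha.1 hb.1 ha.2 hb.2
  obtain ⟨w, hw⟩ := unique_of_subsingleton (fun x => G.Adj v x ∧ f v < f x)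
    fun a b ha hb => hup v a b ha.1 hb.1 ha.2 hb.2
  exact ⟨u, w, fun x hx =>
    (hf v x hx).symm.lt_or_gt.imp (fun h => hu x ⟨hx, h⟩) (fun h => hw x ⟨hx, h⟩)⟩

end SimpleGraph

theorem Consec.right_unique {W : Finset ℝ} {b x y : ℝ} (hx : Consec W b x)
    (hy : Consec W b y) : x = y := by
  by_contra hne
  rcases lt_or_gt_of_ne hne with h | h
  · exact hy.2.2.2 x hx.2.1 ⟨hx.2.2.1, h⟩
  · exact hx.2.2.2 y hy.2.1 ⟨hy.2.2.1, h⟩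

theorem Consec.left_unique {W : Finset ℝ} {a x y : ℝ} (hx : Consec W x a)
    (hy : Consec W y a) : x = y := by
  by_contra hne
  rcases lt_or_gt_of_ne hne with h | h
  · exact hx.2.2.2 y hy.1 ⟨h, hy.2.2.1⟩
  · exact hy.2.2.2 x hx.1 ⟨h, hx.2.2.1⟩

theorem Consec.of_disjoint_Icc {W : Finset ℝ} {a b a' b' u v : ℝ} (hb : b ∈ W) (ha' : a' ∈ W)
    (hdisj : ∀ x ∈ W, x ∈ Set.Icc a b → x ∉ Set.Icc a' b')
    (hu : u ∈ Set.Icc a b) (hv : v ∈ Set.Icc a' b') (huv : Consec W u v) : Consec W b a' := by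
  obtain ⟨-, hvW, hlt, hgap⟩ := huv
  have hbv : b < v := by
    by_contra! hvb
    exact hdisj v hvW ⟨hu.1.trans hlt.le, hvb⟩ hv
  have hub : u = b := by
    by_contra hne
    exact hgap b hb ⟨lt_of_le_of_ne hu.2 hne, hbv⟩
  have hba' : b < a' := by
    by_contra! hab
    exact hdisj b hb ⟨hu.1.trans hu.2, le_rfl⟩ ⟨hab, hbv.le.trans hv.2⟩
  exact ⟨hb, ha', hba', fun c hc ⟨hbc, hca⟩ => hgap c hc ⟨hub ▸ hbc, hca.trans_le hv.1⟩⟩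

namespace HAdjIntervals

variable {V Hl : Finset ℝ} {s s' : Set (ℝ × ℝ)} {p p' : ℝ × ℝ}

theorem symm (h : HAdjIntervals V Hl s s') : HAdjIntervals V Hl s' s := by
  obtain ⟨hd, y, hy, hs, hs', u, hu, v, hv, huv⟩ := h
  exact ⟨hd.symm, y, hy, hs', hs, v, hv, u, hu, huv.symm⟩

theorem snd_eq (h : HAdjIntervals V Hl s s') (hp : p ∈ s) (hp' : p' ∈ s') : p.2 = p'.2 := by
  obtain ⟨-, y, -, hs, hs', -⟩ := h
  rw [hs p hp, hs' p' hp']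

theorem add_ne (h : HAdjIntervals V Hl s s') (hp : p ∈ s) (hp' : p' ∈ s') :
    p.1 + p.2 ≠ p'.1 + p'.2 := by
  intro hsum
  have hpp' : p = p' := Prod.ext (by linarith [h.snd_eq hp hp']) (h.snd_eq hp hp')
  exact Set.disjoint_left.mp h.1 hp (hpp' ▸ hp')

theorem consec_of_fst_lt {a b a' b' y y' : ℝ}
    (h : HAdjIntervals V Hl {q | q.1 ∈ V ∧ a ≤ q.1 ∧ q.1 ≤ b ∧ q.2 = y}
      {q | q.1 ∈ V ∧ a' ≤ q.1 ∧ q.1 ≤ b' ∧ q.2 = y'})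
    (ha : a ∈ V) (hb : b ∈ V) (ha' : a' ∈ V) (hb' : b' ∈ V)
    (hp : p ∈ {q : ℝ × ℝ | q.1 ∈ V ∧ a ≤ q.1 ∧ q.1 ≤ b ∧ q.2 = y})
    (hp' : p' ∈ {q : ℝ × ℝ | q.1 ∈ V ∧ a' ≤ q.1 ∧ q.1 ≤ b' ∧ q.2 = y'})
    (hlt : p.1 < p'.1) : Consec V b a' := by
  have hyy' : y = y' := hp.2.2.2.symm.trans ((h.snd_eq hp hp').trans hp'.2.2.2)
  have hdisj : ∀ x ∈ V, x ∈ Set.Icc a b → x ∉ Set.Icc a' b' := fun x hx hxs hxs' =>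
    Set.disjoint_left.mp h.1 (show (x, y) ∈ _ from ⟨hx, hxs.1, hxs.2, rfl⟩)
      ⟨hx, hxs'.1, hxs'.2, hyy'⟩
  obtain ⟨-, -, -, -, -, u, hu, v, hv, huv | hvu⟩ := h
  · exact Consec.of_disjoint_Icc hb ha' hdisj ⟨hu.2.1, hu.2.2.1⟩ ⟨hv.2.1, hv.2.2.1⟩ huv
  · have hb'a := Consec.of_disjoint_Icc hb' ha (fun x hx hxs' hxs => hdisj x hx hxs hxs')
      ⟨hv.2.1, hv.2.2.1⟩ ⟨hu.2.1, hu.2.2.1⟩ hvu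
    linarith [hb'a.2.2.1, hp.2.1, hp'.2.2.1]

variable {s₁ s₂ : Set (ℝ × ℝ)} {p₁ p₂ : ℝ × ℝ}

theorem inter_nonempty_of_lt (hs : IsHInterval V Hl s) (hs₁ : IsHInterval V Hl s₁)
    (hs₂ : IsHInterval V Hl s₂) (h₁ : HAdjIntervals V Hl s s₁) (h₂ : HAdjIntervals V Hl s s₂)
    (hp : p ∈ s) (hp₁ : p₁ ∈ s₁) (hp₂ : p₂ ∈ s₂)
    (hlt₁ : p.1 + p.2 < p₁.1 + p₁.2) (hlt₂ : p.1 + p.2 < p₂.1 + p₂.2) : (s₁ ∩ s₂).Nonempty := by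
  obtain ⟨y, -, a, ha, b, hb, -, rfl⟩ := hs
  obtain ⟨y₁, -, a₁, ha₁, b₁, hb₁, hab₁, rfl⟩ := hs₁
  obtain ⟨y₂, -, a₂, ha₂, b₂, hb₂, hab₂, rfl⟩ := hs₂
  have e₁ := h₁.snd_eq hp hp₁
  have e₂ := h₂.snd_eq hp hp₂
  have c₁ := h₁.consec_of_fst_lt ha hb ha₁ hb₁ hp hp₁ (by linarith)
  have c₂ := h₂.consec_of_fst_lt ha hb ha₂ hb₂ hp hp₂ (by linarith)
  have ha₁₂ : a₁ = a₂ := c₁.right_unique c₂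
  subst ha₁₂
  refine ⟨(a₁, y), ⟨ha₁, le_rfl, hab₁, ?_⟩, ⟨ha₁, le_rfl, hab₂, ?_⟩⟩ <;>
    linarith [hp.2.2.2, hp₁.2.2.2, hp₂.2.2.2]

theorem inter_nonempty_of_gt (hs : IsHInterval V Hl s) (hs₁ : IsHInterval V Hl s₁)
    (hs₂ : IsHInterval V Hl s₂) (h₁ : HAdjIntervals V Hl s s₁) (h₂ : HAdjIntervals V Hl s s₂)
    (hp : p ∈ s) (hp₁ : p₁ ∈ s₁) (hp₂ : p₂ ∈ s₂)
    (hgt₁ : p₁.1 + p₁.2 < p.1 + p.2) (hgt₂ : p₂.1 + p₂.2 < p.1 + p.2) : (s₁ ∩ s₂).Nonempty := by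
  obtain ⟨y, -, a, ha, b, hb, -, rfl⟩ := hs
  obtain ⟨y₁, -, a₁, ha₁, b₁, hb₁, hab₁, rfl⟩ := hs₁
  obtain ⟨y₂, -, a₂, ha₂, b₂, hb₂, hab₂, rfl⟩ := hs₂
  have e₁ := h₁.snd_eq hp hp₁
  have e₂ := h₂.snd_eq hp hp₂
  have c₁ := h₁.symm.consec_of_fst_lt ha₁ hb₁ ha hb hp₁ hp (by linarith)
  have c₂ := h₂.symm.consec_of_fst_lt ha₂ hb₂ ha hb hp₂ hp (by linarith)
  have hb₁₂ : b₁ = b₂ := c₁.left_unique c₂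
  subst hb₁₂
  refine ⟨(b₁, y), ⟨hb₁, hab₁, le_rfl, ?_⟩, ⟨hb₁, hab₂, le_rfl, ?_⟩⟩ <;>
    linarith [hp.2.2.2, hp₁.2.2.2, hp₂.2.2.2]

end HAdjIntervals

theorem VAdjIntervals.symm {V Hl : Finset ℝ} {s s' : Set (ℝ × ℝ)}
    (h : VAdjIntervals V Hl s s') : VAdjIntervals V Hl s' s := by
  obtain ⟨hd, x, hx, hs, hs', u, hu, v, hv, huv⟩ := h
  exact ⟨hd.symm, x, hx, hs', hs, v, hv, u, hu, huv.symm⟩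

theorem IsVInterval.preimage_swap {V Hl : Finset ℝ} {s : Set (ℝ × ℝ)}
    (h : IsVInterval V Hl s) : IsHInterval Hl V (Prod.swap ⁻¹' s) := by
  obtain ⟨x, hx, a, ha, b, hb, hab, rfl⟩ := h
  exact ⟨x, hx, a, ha, b, hb, hab, rfl⟩

theorem VAdjIntervals.preimage_swap {V Hl : Finset ℝ} {s s' : Set (ℝ × ℝ)}
    (h : VAdjIntervals V Hl s s') : HAdjIntervals Hl V (Prod.swap ⁻¹' s) (Prod.swap ⁻¹' s') := by
  obtain ⟨hd, x, hx, hs, hs', u, hu, v, hv, huv⟩ := h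
  exact ⟨hd.preimage _, x, hx, fun p hp => hs _ hp, fun p hp => hs' _ hp,
    u.swap, hu, v.swap, hv, huv⟩

section Orientation

-- Vertical configurations are horizontal ones in swapped coordinates; `p.1 + p.2` is symmetric.

variable {V Hl : Finset ℝ} {o : Bool} {s s' s₁ s₂ : Set (ℝ × ℝ)} {p p' p₁ p₂ : ℝ × ℝ}

theorem add_ne_of_intervalAdj
    (h : if o then HAdjIntervals V Hl s s' else VAdjIntervals V Hl s s')
    (hp : p ∈ s) (hp' : p' ∈ s') : p.1 + p.2 ≠ p'.1 + p'.2 := by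
  cases o
  · simpa only [Prod.fst_swap, Prod.snd_swap, add_comm] using
      (VAdjIntervals.preimage_swap h).add_ne (p := p.swap) (p' := p'.swap) hp hp'
  · exact HAdjIntervals.add_ne h hp hp'

theorem inter_nonempty_of_intervalAdj_of_lt
    (hs : if o then IsHInterval V Hl s else IsVInterval V Hl s)
    (hs₁ : if o then IsHInterval V Hl s₁ else IsVInterval V Hl s₁)
    (hs₂ : if o then IsHInterval V Hl s₂ else IsVInterval V Hl s₂)
    (h₁ : if o then HAdjIntervals V Hl s s₁ else VAdjIntervals V Hl s s₁)
    (h₂ : if o then HAdjIntervals V Hl s s₂ else VAdjIntervals V Hl s s₂)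
    (hp : p ∈ s) (hp₁ : p₁ ∈ s₁) (hp₂ : p₂ ∈ s₂)
    (hlt₁ : p.1 + p.2 < p₁.1 + p₁.2) (hlt₂ : p.1 + p.2 < p₂.1 + p₂.2) : (s₁ ∩ s₂).Nonempty := by
  cases o
  · obtain ⟨q, hq⟩ := HAdjIntervals.inter_nonempty_of_lt (p := p.swap) (p₁ := p₁.swap)
      (p₂ := p₂.swap) (IsVInterval.preimage_swap hs) (IsVInterval.preimage_swap hs₁)
      (IsVInterval.preimage_swap hs₂) (VAdjIntervals.preimage_swap h₁)
      (VAdjIntervals.preimage_swap h₂) hp hp₁ hp₂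
      (by simpa only [Prod.fst_swap, Prod.snd_swap, add_comm] using hlt₁)
      (by simpa only [Prod.fst_swap, Prod.snd_swap, add_comm] using hlt₂)
    exact ⟨q.swap, hq⟩
  · exact HAdjIntervals.inter_nonempty_of_lt hs hs₁ hs₂ h₁ h₂ hp hp₁ hp₂ hlt₁ hlt₂

theorem inter_nonempty_of_intervalAdj_of_gt
    (hs : if o then IsHInterval V Hl s else IsVInterval V Hl s)
    (hs₁ : if o then IsHInterval V Hl s₁ else IsVInterval V Hl s₁)
    (hs₂ : if o then IsHInterval V Hl s₂ else IsVInterval V Hl s₂)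
    (h₁ : if o then HAdjIntervals V Hl s s₁ else VAdjIntervals V Hl s s₁)
    (h₂ : if o then HAdjIntervals V Hl s s₂ else VAdjIntervals V Hl s s₂)
    (hp : p ∈ s) (hp₁ : p₁ ∈ s₁) (hp₂ : p₂ ∈ s₂)
    (hgt₁ : p₁.1 + p₁.2 < p.1 + p.2) (hgt₂ : p₂.1 + p₂.2 < p.1 + p.2) : (s₁ ∩ s₂).Nonempty := by
  cases o
  · obtain ⟨q, hq⟩ := HAdjIntervals.inter_nonempty_of_gt (p := p.swap) (p₁ := p₁.swap)
      (p₂ := p₂.swap) (IsVInterval.preimage_swap hs) (IsVInterval.preimage_swap hs₁)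
      (IsVInterval.preimage_swap hs₂) (VAdjIntervals.preimage_swap h₁)
      (VAdjIntervals.preimage_swap h₂) hp hp₁ hp₂
      (by simpa only [Prod.fst_swap, Prod.snd_swap, add_comm] using hgt₁)
      (by simpa only [Prod.fst_swap, Prod.snd_swap, add_comm] using hgt₂)
    exact ⟨q.swap, hq⟩
  · exact HAdjIntervals.inter_nonempty_of_gt hs hs₁ hs₂ h₁ h₂ hp hp₁ hp₂ hgt₁ hgt₂

end Orientation

section CspGraph

variable {V Hl : Finset ℝ} {T : Type} {P : T → Set (ℝ × ℝ)} {orient : T → Bool}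

theorem cspGraph_adj {t w : T} (h : (cspGraph V Hl P orient).Adj t w) :
    orient w = orient t ∧
      if orient t then HAdjIntervals V Hl (P t) (P w) else VAdjIntervals V Hl (P t) (P w) := by
  rw [cspGraph, SimpleGraph.fromRel_adj] at h
  rcases h.2 with (⟨ht, hw, h⟩ | ⟨ht, hw, h⟩) | (⟨hw, ht, h⟩ | ⟨hw, ht, h⟩)
  all_goals simp only [ht, hw, if_true, Bool.false_eq_true, if_false, true_and]
  exacts [h, h, HAdjIntervals.symm h, VAdjIntervals.symm h]

theorem cspGraph_eq_of_lt_of_lt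
    (hint : ∀ t, if orient t then IsHInterval V Hl (P t) else IsVInterval V Hl (P t))
    (hdisj : ∀ t t', t ≠ t' → Disjoint (P t) (P t')) {t w₁ w₂ : T} {p p₁ p₂ : ℝ × ℝ}
    (h₁ : (cspGraph V Hl P orient).Adj t w₁) (h₂ : (cspGraph V Hl P orient).Adj t w₂)
    (hp : p ∈ P t) (hp₁ : p₁ ∈ P w₁) (hp₂ : p₂ ∈ P w₂)
    (hlt₁ : p.1 + p.2 < p₁.1 + p₁.2) (hlt₂ : p.1 + p.2 < p₂.1 + p₂.2) : w₁ = w₂ := by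
  obtain ⟨ho₁, h₁⟩ := cspGraph_adj h₁
  obtain ⟨ho₂, h₂⟩ := cspGraph_adj h₂
  by_contra hne
  obtain ⟨q, hq₁, hq₂⟩ := inter_nonempty_of_intervalAdj_of_lt (hint t) (ho₁ ▸ hint w₁)
    (ho₂ ▸ hint w₂) h₁ h₂ hp hp₁ hp₂ hlt₁ hlt₂
  exact Set.disjoint_left.mp (hdisj w₁ w₂ hne) hq₁ hq₂

theorem cspGraph_eq_of_gt_of_gt
    (hint : ∀ t, if orient t then IsHInterval V Hl (P t) else IsVInterval V Hl (P t))
    (hdisj : ∀ t t', t ≠ t' → Disjoint (P t) (P t')) {t w₁ w₂ : T} {p p₁ p₂ : ℝ × ℝ}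
    (h₁ : (cspGraph V Hl P orient).Adj t w₁) (h₂ : (cspGraph V Hl P orient).Adj t w₂)
    (hp : p ∈ P t) (hp₁ : p₁ ∈ P w₁) (hp₂ : p₂ ∈ P w₂)
    (hgt₁ : p₁.1 + p₁.2 < p.1 + p.2) (hgt₂ : p₂.1 + p₂.2 < p.1 + p.2) : w₁ = w₂ := by
  obtain ⟨ho₁, h₁⟩ := cspGraph_adj h₁
  obtain ⟨ho₂, h₂⟩ := cspGraph_adj h₂
  by_contra hne
  obtain ⟨q, hq₁, hq₂⟩ := inter_nonempty_of_intervalAdj_of_gt (hint t) (ho₁ ▸ hint w₁)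
    (ho₂ ▸ hint w₂) h₁ h₂ hp hp₁ hp₂ hgt₁ hgt₂
  exact Set.disjoint_left.mp (hdisj w₁ w₂ hne) hq₁ hq₂

end CspGraph

/-- the Gaifman graph of the 2-CSP instance is a disjoint union of paths:
every vertex has at most two neighbours and the graph is acyclic. -/
theorem stmt17 (V Hl : Finset ℝ) (T : Type) (P : T → Set (ℝ × ℝ)) (orient : T → Bool)
    (hne : ∀ t, (P t).Nonempty)
    (hint : ∀ t, if orient t then IsHInterval V Hl (P t) else IsVInterval V Hl (P t))
    (hdisj : ∀ t t', t ≠ t' → Disjoint (P t) (P t')) :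
    (∀ t, ∃ u v, ∀ w, (cspGraph V Hl P orient).Adj t w → w = u ∨ w = v) ∧
    (cspGraph V Hl P orient).IsAcyclic := by
  set f : T → ℝ := fun t => (hne t).some.1 + (hne t).some.2
  have hf : ∀ t w, (cspGraph V Hl P orient).Adj t w → f t ≠ f w := fun t w h =>
    add_ne_of_intervalAdj (cspGraph_adj h).2 (hne t).some_mem (hne w).some_mem
  have hlow : ∀ t w₁ w₂, (cspGraph V Hl P orient).Adj t w₁ →
      (cspGraph V Hl P orient).Adj t w₂ → f w₁ < f t → f w₂ < f t → w₁ = w₂ :=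
    fun t w₁ w₂ h₁ h₂ => cspGraph_eq_of_gt_of_gt hint hdisj h₁ h₂ (hne t).some_mem
      (hne w₁).some_mem (hne w₂).some_mem
  have hup : ∀ t w₁ w₂, (cspGraph V Hl P orient).Adj t w₁ →
      (cspGraph V Hl P orient).Adj t w₂ → f t < f w₁ → f t < f w₂ → w₁ = w₂ :=
    fun t w₁ w₂ h₁ h₂ => cspGraph_eq_of_lt_of_lt hint hdisj h₁ h₂ (hne t).some_mem
      (hne w₁).some_mem (hne w₂).some_mem
  exact ⟨SimpleGraph.exists_neighbors_subset_pair hf hlow hup,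
    SimpleGraph.isAcyclic_of_lower_neighbor_unique hf hlow⟩
end
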